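/- Let 𝒜 be a finite irreducible set of real d×d matrices with p-measure of irreducibility χ_p(𝒜) > 0, and suppose there exist matrices A_{i₁},…,A_{iₙ} ∈ 𝒜 and x* ≠ 0 with ‖A_{iₙ}⋯A_{i₁} x*‖ ≥ μ η_p(𝒜) ρ(𝒜)ⁿ ‖x*‖ for some μ > 1. Then there exists a sequence of products H_k of matrices from 𝒜 with len(H_k) → ∞ and ‖H_k‖ ≥ (η ρ(𝒜))^{len(H_k)} for all k, where η = μ^{1/(n+p)} > 1. -/

import Mathlib

open Filter Set

/-- The set of all products of exactly `n` matrices from `𝒜`. -/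
def prods {d : ℕ} (𝒜 : Set (Matrix (Fin d) (Fin d) ℝ)) (n : ℕ) :
    Set (Matrix (Fin d) (Fin d) ℝ) :=
  {P | ∃ l : List (Matrix (Fin d) (Fin d) ℝ), l.length = n ∧ (∀ A ∈ l, A ∈ 𝒜) ∧ l.prod = P}

/-- `‖𝒜ⁿ‖`: the supremum of the norm `N` over all `n`-fold products from `𝒜`. -/
noncomputable def supN {d : ℕ} (N : Matrix (Fin d) (Fin d) ℝ → ℝ)
    (𝒜 : Set (Matrix (Fin d) (Fin d) ℝ)) (n : ℕ) : ℝ :=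
  sSup (N '' prods 𝒜 n)

/-- The joint spectral radius of `𝒜` with respect to the matrix norm `N`,
given by the generalized Gelfand formula. -/
noncomputable def jsr {d : ℕ} (N : Matrix (Fin d) (Fin d) ℝ → ℝ)
    (𝒜 : Set (Matrix (Fin d) (Fin d) ℝ)) : ℝ :=
  Filter.limsup (fun n : ℕ => (supN N 𝒜 n) ^ ((n : ℝ)⁻¹)) Filter.atTop

/-- A (matrix) norm: nonnegative, definite, absolutely homogeneous, subadditive. -/
def IsMatNorm {d : ℕ} (N : Matrix (Fin d) (Fin d) ℝ → ℝ) : Prop :=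
  (∀ A, 0 ≤ N A) ∧ (∀ A, N A = 0 ↔ A = 0) ∧
  (∀ (c : ℝ) A, N (c • A) = |c| * N A) ∧ (∀ A B, N (A + B) ≤ N A + N B)

/-- Products of at most `p` factors from `𝒜` (including the empty product `1`). -/
def prodsLe {d : ℕ} (𝒜 : Set (Matrix (Fin d) (Fin d) ℝ)) (p : ℕ) :
    Set (Matrix (Fin d) (Fin d) ℝ) :=
  ⋃ k ∈ Finset.range (p + 1), prods 𝒜 k

/-- A vector norm on `ℝ^d`: nonnegative, definite, absolutely homogeneous, subadditive. -/
def IsNorm {d : ℕ} (ν : (Fin d → ℝ) → ℝ) : Prop :=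
  (∀ x, 0 ≤ ν x) ∧ (∀ x, ν x = 0 ↔ x = 0) ∧
  (∀ (a : ℝ) x, ν (a • x) = |a| * ν x) ∧ (∀ x y, ν (x + y) ≤ ν x + ν y)

/-- Operator norm of a matrix induced by the vector norm `ν` on `ℝ^d`. -/
noncomputable def opNorm {d : ℕ} (ν : (Fin d → ℝ) → ℝ)
    (A : Matrix (Fin d) (Fin d) ℝ) : ℝ :=
  sSup ((fun x => ν (A.mulVec x)) '' {x | ν x = 1})

/-- `‖𝒜ⁿ‖` computed with the operator norm induced by `ν`. -/
noncomputable def supNu {d : ℕ} (ν : (Fin d → ℝ) → ℝ)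
    (𝒜 : Set (Matrix (Fin d) (Fin d) ℝ)) (n : ℕ) : ℝ :=
  supN (opNorm ν) 𝒜 n

/-- The joint spectral radius computed with the operator norm induced by `ν`. -/
noncomputable def jsrNu {d : ℕ} (ν : (Fin d → ℝ) → ℝ)
    (𝒜 : Set (Matrix (Fin d) (Fin d) ℝ)) : ℝ :=
  jsr (opNorm ν) 𝒜

/-- The `p`-measure of irreducibility (quasi-controllability) of `𝒜`
with respect to the vector norm `ν`:
`χ_p(𝒜) = inf_{ν x = 1} sup { t : S(t) ⊆ conv(𝒜_p(x) ∪ 𝒜_p(−x)) }`. -/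
noncomputable def chi {d : ℕ} (ν : (Fin d → ℝ) → ℝ)
    (𝒜 : Set (Matrix (Fin d) (Fin d) ℝ)) (p : ℕ) : ℝ :=
  sInf ((fun x => sSup {t : ℝ | 0 ≤ t ∧
      {y | ν y ≤ t} ⊆ convexHull ℝ
        (((fun A => A.mulVec x) '' prodsLe 𝒜 p) ∪
         ((fun A => A.mulVec (-x)) '' prodsLe 𝒜 p))}) '' {x | ν x = 1})

/-- `𝒜` is irreducible: the only common invariant subspaces are `⊥` and `⊤`. -/
def MatSetIrreducible {d : ℕ} (𝒜 : Set (Matrix (Fin d) (Fin d) ℝ)) : Prop :=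
  ∀ L : Submodule ℝ (Fin d → ℝ), (∀ A ∈ 𝒜, ∀ x ∈ L, A.mulVec x ∈ L) → L = ⊥ ∨ L = ⊤

/-!
Write `P = A_{iₙ}⋯A_{i₁}`, `χ = χ_p(𝒜)` and `r = ‖P x*‖ / ‖x*‖ ≥ μ max(1, ρ^p) ρⁿ / χ`.
For any `w = ‖w‖ u`, take a functional `g ≤ ‖·‖` with `g (P x*) = ‖P x*‖`. The linear form `g ∘ P`
is maximal on the finite set `𝒜_p(u) ∪ 𝒜_p(-u)` at some `± B u`, `B` a product of `q ≤ p` factors;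
as the convex hull of that set contains the ball of radius `χ`, hence the vector `χ x* / ‖x*‖`,
we get `‖P B w‖ ≥ χ r ‖w‖ ≥ μ max(1, ρ^p) ρⁿ ‖w‖ ≥ (ηρ)^{n+q} ‖w‖`. So every vector is stretched by
some block `P B` by at least `ηρ` per factor, and iterating the blocks gives arbitrarily long
products `H` with `‖H‖ ≥ (ηρ)^{len H}`.
-/

open scoped Matrix

/-- `ℝ^d` equipped with `ν` as its norm, so that the theory of finite-dimensional normed spaces
applies to `ν`. -/
def NormedBy {d : ℕ} (_ν : (Fin d → ℝ) → ℝ) : Type := Fin d → ℝ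

namespace NormedBy

variable {d : ℕ} {ν : (Fin d → ℝ) → ℝ}

instance : AddCommGroup (NormedBy ν) := inferInstanceAs (AddCommGroup (Fin d → ℝ))

instance : Module ℝ (NormedBy ν) := inferInstanceAs (Module ℝ (Fin d → ℝ))

instance : FiniteDimensional ℝ (NormedBy ν) := inferInstanceAs (FiniteDimensional ℝ (Fin d → ℝ))

instance : Norm (NormedBy ν) := ⟨ν⟩

end NormedBy

namespace IsNorm

variable {d : ℕ} {ν : (Fin d → ℝ) → ℝ}

lemma map_zero (hν : IsNorm ν) : ν 0 = 0 := (hν.2.1 0).2 rfl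

lemma pos (hν : IsNorm ν) {x : Fin d → ℝ} (hx : x ≠ 0) : 0 < ν x :=
  (hν.1 x).lt_of_ne fun h => hx ((hν.2.1 x).1 h.symm)

lemma map_smul_of_nonneg (hν : IsNorm ν) {a : ℝ} (ha : 0 ≤ a) (x : Fin d → ℝ) :
    ν (a • x) = a * ν x := by
  rw [hν.2.2.1, abs_of_nonneg ha]

lemma map_neg (hν : IsNorm ν) (x : Fin d → ℝ) : ν (-x) = ν x := by
  simpa using hν.2.2.1 (-1) x

lemma map_inv_smul_self (hν : IsNorm ν) {x : Fin d → ℝ} (hx : x ≠ 0) : ν ((ν x)⁻¹ • x) = 1 := by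
  rw [hν.map_smul_of_nonneg (inv_nonneg.2 (hν.1 x)), inv_mul_cancel₀ (hν.pos hx).ne']

lemma core (hν : IsNorm ν) : NormedSpace.Core ℝ (NormedBy ν) where
  norm_nonneg := hν.1
  norm_smul := hν.2.2.1
  norm_triangle := hν.2.2.2
  norm_eq_zero_iff := hν.2.1

lemma exists_mulVec_le (hν : IsNorm ν) (A : Matrix (Fin d) (Fin d) ℝ) :
    ∃ C, ∀ x, ν (A *ᵥ x) ≤ C * ν x := by
  let := NormedAddCommGroup.ofCore hν.core
  let := NormedSpace.ofCore hν.core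
  let L : NormedBy ν →L[ℝ] NormedBy ν := LinearMap.toContinuousLinearMap A.mulVecLin
  exact ⟨‖L‖, L.le_opNorm⟩

lemma exists_dual_le (hν : IsNorm ν) (w : Fin d → ℝ) :
    ∃ g : (Fin d → ℝ) →ₗ[ℝ] ℝ, (∀ z, g z ≤ ν z) ∧ g w = ν w := by
  let := NormedAddCommGroup.ofCore hν.core
  let := NormedSpace.ofCore hν.core
  obtain ⟨g, hg, hgw⟩ := exists_dual_vector'' (E := NormedBy ν) ℝ w
  refine ⟨g.toLinearMap, fun z => ?_, hgw⟩
  calc g z ≤ ‖g z‖ := Real.le_norm_self _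
    _ ≤ ‖g‖ * ν z := g.le_opNorm z
    _ ≤ ν z := mul_le_of_le_one_left (hν.1 z) hg

lemma opNorm_nonneg (hν : IsNorm ν) (A : Matrix (Fin d) (Fin d) ℝ) : 0 ≤ opNorm ν A :=
  Real.sSup_nonneg (by rintro _ ⟨x, -, rfl⟩; exact hν.1 _)

lemma mulVec_le_opNorm (hν : IsNorm ν) (A : Matrix (Fin d) (Fin d) ℝ) (x : Fin d → ℝ) :
    ν (A *ᵥ x) ≤ opNorm ν A * ν x := by
  rcases eq_or_ne x 0 with rfl | hx
  · simp [hν.map_zero]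
  obtain ⟨C, hC⟩ := hν.exists_mulVec_le A
  have hνx := hν.pos hx
  have hAu : ν (A *ᵥ ((ν x)⁻¹ • x)) ≤ opNorm ν A :=
    le_csSup ⟨C, by rintro _ ⟨y, hy, rfl⟩; simpa [hy.out] using hC y⟩
      ⟨_, hν.map_inv_smul_self hx, rfl⟩
  rwa [Matrix.mulVec_smul, hν.map_smul_of_nonneg (inv_nonneg.2 hνx.le), inv_mul_le_iff₀ hνx,
    mul_comm] at hAu

lemma jsrNu_nonneg (hν : IsNorm ν) (𝒜 : Set (Matrix (Fin d) (Fin d) ℝ)) : 0 ≤ jsrNu ν 𝒜 := by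
  have hsup : ∀ n, 0 ≤ supNu ν 𝒜 n := fun n =>
    Real.sSup_nonneg (by rintro _ ⟨A, -, rfl⟩; exact hν.opNorm_nonneg A)
  refine Real.sInf_nonneg fun a ha => ?_
  obtain ⟨n, hn⟩ := (Filter.eventually_map.1 ha).exists
  exact (Real.rpow_nonneg (hsup n) _).trans hn

end IsNorm

section Products

variable {d : ℕ} {𝒜 : Set (Matrix (Fin d) (Fin d) ℝ)}

lemma prods_finite (h𝒜 : 𝒜.Finite) (k : ℕ) : (prods 𝒜 k).Finite := by
  induction k with
  | zero =>
    refine (Set.finite_singleton 1).subset ?_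
    rintro _ ⟨l, hl, -, rfl⟩
    simp [List.length_eq_zero_iff.1 hl]
  | succ k ih =>
    refine ((h𝒜.prod ih).image fun q => q.1 * q.2).subset ?_
    rintro _ ⟨_ | ⟨A, l⟩, hl, hl𝒜, rfl⟩
    · simp at hl
    exact ⟨(A, l.prod), ⟨hl𝒜 A (by simp), l, by simpa using hl,
      fun B hB => hl𝒜 B (by simp [hB]), rfl⟩, by simp⟩

lemma prodsLe_finite (h𝒜 : 𝒜.Finite) (p : ℕ) : (prodsLe 𝒜 p).Finite :=
  (Finset.range (p + 1)).finite_toSet.biUnion fun k _ => prods_finite h𝒜 k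

lemma mem_prodsLe {p : ℕ} {B : Matrix (Fin d) (Fin d) ℝ} :
    B ∈ prodsLe 𝒜 p ↔ ∃ l : List (Matrix (Fin d) (Fin d) ℝ),
      l.length ≤ p ∧ (∀ A ∈ l, A ∈ 𝒜) ∧ l.prod = B := by
  simp only [prodsLe, prods, Set.mem_iUnion, Finset.mem_range, exists_prop]
  constructor
  · rintro ⟨k, hk, l, rfl, hl⟩
    exact ⟨l, Nat.lt_succ_iff.1 hk, hl⟩
  · rintro ⟨l, hl, hl'⟩
    exact ⟨l.length, Nat.lt_succ_of_le hl, l, rfl, hl'⟩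

lemma one_mem_prodsLe (p : ℕ) : (1 : Matrix (Fin d) (Fin d) ℝ) ∈ prodsLe 𝒜 p :=
  mem_prodsLe.2 ⟨[], Nat.zero_le p, by simp, rfl⟩

end Products

lemma le_of_forall_nonneg_lt_one_mul_le {a b : ℝ} (h : ∀ θ : ℝ, 0 ≤ θ → θ < 1 → θ * a ≤ b) :
    a ≤ b := by
  refine le_of_forall_lt_imp_le_of_dense fun c hc => ?_
  rcases le_or_gt c 0 with hc0 | hc0
  · simpa using hc0.trans (by simpa using h 0 le_rfl one_pos)
  · have ha : 0 < a := hc0.trans hc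
    simpa [div_mul_cancel₀ _ ha.ne'] using h (c / a) (by positivity) ((div_lt_one ha).2 hc)

section Stretch

variable {d : ℕ} {ν : (Fin d → ℝ) → ℝ} {𝒜 : Set (Matrix (Fin d) (Fin d) ℝ)} {p : ℕ}

-- Only the open ball: `chi` is an infimum of suprema, neither of which need be attained.
lemma mem_convexHull_of_lt_chi {u y : Fin d → ℝ} (hν : IsNorm ν) (hu : ν u = 1)
    (hy : ν y < chi ν 𝒜 p) :
    y ∈ convexHull ℝ
      (((fun A => A *ᵥ u) '' prodsLe 𝒜 p) ∪ ((fun A => A *ᵥ -u) '' prodsLe 𝒜 p)) := by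
  set T := {t : ℝ | 0 ≤ t ∧ {y | ν y ≤ t} ⊆
    convexHull ℝ (((fun A => A *ᵥ u) '' prodsLe 𝒜 p) ∪ ((fun A => A *ᵥ -u) '' prodsLe 𝒜 p))}
  have hχT : chi ν 𝒜 p ≤ sSup T :=
    csInf_le ⟨0, by rintro _ ⟨x, -, rfl⟩; exact Real.sSup_nonneg fun t ht => ht.1⟩ ⟨u, hu, rfl⟩
  rcases T.eq_empty_or_nonempty with hT | hT
  · rw [hT, Real.sSup_empty] at hχT
    linarith [hν.1 y]
  · obtain ⟨t, ht, hyt⟩ := exists_lt_of_lt_csSup hT (hy.trans_le hχT)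
    exact ht.2 hyt.le

lemma exists_prodsLe_stretch_of_norm_eq_one (hν : IsNorm ν) (h𝒜 : 𝒜.Finite)
    (hχ : 0 < chi ν 𝒜 p) (P : Matrix (Fin d) (Fin d) ℝ) {x u : Fin d → ℝ} (hx : x ≠ 0)
    (hu : ν u = 1) :
    ∃ B ∈ prodsLe 𝒜 p, chi ν 𝒜 p * ν (P *ᵥ x) ≤ ν x * ν ((P * B) *ᵥ u) := by
  set S := ((fun A => A *ᵥ u) '' prodsLe 𝒜 p) ∪ ((fun A => A *ᵥ -u) '' prodsLe 𝒜 p)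
  obtain ⟨g, hg, hgx⟩ := hν.exists_dual_le (P *ᵥ x)
  set φ := g ∘ₗ P.mulVecLin
  obtain ⟨v, hvS, hvmax⟩ := Set.exists_max_image S φ
    (((prodsLe_finite h𝒜 p).image _).union ((prodsLe_finite h𝒜 p).image _))
    ⟨u, Or.inl ⟨1, one_mem_prodsLe p, Matrix.one_mulVec u⟩⟩
  have hconv : convexHull ℝ S ⊆ {y | φ y ≤ φ v} :=
    convexHull_min hvmax (convex_halfSpace_le φ.isLinear _)
  have hνx := hν.pos hx
  have hφv : chi ν 𝒜 p * ν (P *ᵥ x) ≤ ν x * φ v := by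
    refine le_of_forall_nonneg_lt_one_mul_le fun θ hθ0 hθ1 => ?_
    have hy : ν ((θ * chi ν 𝒜 p / ν x) • x) < chi ν 𝒜 p := by
      rw [hν.map_smul_of_nonneg (by positivity), div_mul_cancel₀ _ hνx.ne']
      nlinarith
    have hφy : φ _ ≤ φ v := hconv (mem_convexHull_of_lt_chi hν hu hy)
    rw [φ.map_smul, smul_eq_mul, show φ x = ν (P *ᵥ x) from hgx, div_mul_eq_mul_div,
      div_le_iff₀ hνx] at hφy
    linarith
  obtain ⟨B, hB, hv⟩ : ∃ B ∈ prodsLe 𝒜 p, φ v ≤ ν ((P * B) *ᵥ u) := by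
    rcases hvS with ⟨B, hB, rfl⟩ | ⟨B, hB, rfl⟩
    · exact ⟨B, hB, by simpa [φ, Matrix.mulVec_mulVec] using hg (P *ᵥ B *ᵥ u)⟩
    · refine ⟨B, hB, ?_⟩
      simpa [φ, Matrix.mulVec_mulVec, Matrix.mulVec_neg, hν.map_neg] using hg (P *ᵥ B *ᵥ -u)
  exact ⟨B, hB, hφv.trans (mul_le_mul_of_nonneg_left hv hνx.le)⟩

lemma exists_prodsLe_stretch (hν : IsNorm ν) (h𝒜 : 𝒜.Finite) (hχ : 0 < chi ν 𝒜 p)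
    (P : Matrix (Fin d) (Fin d) ℝ) {x : Fin d → ℝ} (hx : x ≠ 0) (w : Fin d → ℝ) :
    ∃ B ∈ prodsLe 𝒜 p, chi ν 𝒜 p * ν (P *ᵥ x) * ν w ≤ ν x * ν ((P * B) *ᵥ w) := by
  rcases eq_or_ne w 0 with rfl | hw
  · exact ⟨1, one_mem_prodsLe p, by simp [hν.map_zero]⟩
  obtain ⟨B, hB, hBu⟩ :=
    exists_prodsLe_stretch_of_norm_eq_one hν h𝒜 hχ P hx (hν.map_inv_smul_self hw)
  have hνw := hν.pos hw
  rw [Matrix.mulVec_smul, hν.map_smul_of_nonneg (inv_nonneg.2 hνw.le)] at hBu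
  refine ⟨B, hB, ?_⟩
  calc chi ν 𝒜 p * ν (P *ᵥ x) * ν w ≤ ν x * ((ν w)⁻¹ * ν ((P * B) *ᵥ w)) * ν w := by gcongr
    _ = ν x * ν ((P * B) *ᵥ w) := by field_simp

lemma exists_long_products_of_stretch {c : ℝ} (hc : 0 ≤ c)
    (hstretch : ∀ w, ∃ l : List (Matrix (Fin d) (Fin d) ℝ),
      (∀ A ∈ l, A ∈ 𝒜) ∧ 0 < l.length ∧ c ^ l.length * ν w ≤ ν (l.prod *ᵥ w))
    (x : Fin d → ℝ) (k : ℕ) :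
    ∃ l : List (Matrix (Fin d) (Fin d) ℝ),
      (∀ A ∈ l, A ∈ 𝒜) ∧ k ≤ l.length ∧ c ^ l.length * ν x ≤ ν (l.prod *ᵥ x) := by
  induction k with
  | zero => exact ⟨[], by simp, le_rfl, by simp⟩
  | succ k ih =>
    obtain ⟨l, hl𝒜, hlk, hlx⟩ := ih
    obtain ⟨m, hm𝒜, hm, hmx⟩ := hstretch (l.prod *ᵥ x)
    refine ⟨m ++ l, fun A hA => (List.mem_append.1 hA).elim (hm𝒜 A) (hl𝒜 A), ?_, ?_⟩
    · rw [List.length_append]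
      omega
    · rw [List.length_append, pow_add, List.prod_append, ← Matrix.mulVec_mulVec, mul_assoc]
      exact (mul_le_mul_of_nonneg_left hlx (pow_nonneg hc _)).trans hmx

lemma exists_seq_pow_le_opNorm_of_stretch (hν : IsNorm ν) {x : Fin d → ℝ} (hx : x ≠ 0)
    {c : ℝ} (hc : 0 ≤ c)
    (hstretch : ∀ w, ∃ l : List (Matrix (Fin d) (Fin d) ℝ),
      (∀ A ∈ l, A ∈ 𝒜) ∧ 0 < l.length ∧ c ^ l.length * ν w ≤ ν (l.prod *ᵥ w)) :
    ∃ H : ℕ → List (Matrix (Fin d) (Fin d) ℝ), (∀ k, ∀ A ∈ H k, A ∈ 𝒜) ∧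
      Tendsto (fun k => (H k).length) atTop atTop ∧
      ∀ k, c ^ (H k).length ≤ opNorm ν (H k).prod := by
  choose H hH𝒜 hHk hHx using exists_long_products_of_stretch hc hstretch x
  exact ⟨H, hH𝒜, tendsto_atTop_mono hHk tendsto_id,
    fun k => le_of_mul_le_mul_right ((hHx k).trans (hν.mulVec_le_opNorm _ x)) (hν.pos hx)⟩

end Stretch

lemma rpow_inv_mul_pow_le {μ ρ : ℝ} {n p q : ℕ} (hμ : 1 ≤ μ) (hρ : 0 ≤ ρ)
    (hnp : (0 : ℝ) < n + p) (hqp : q ≤ p) :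
    (μ ^ (((n : ℝ) + p)⁻¹) * ρ) ^ (n + q) ≤ μ * max 1 (ρ ^ p) * ρ ^ n := by
  rw [mul_pow, pow_add ρ, mul_assoc, mul_comm (ρ ^ n)]
  have hq : ρ ^ q ≤ max 1 (ρ ^ p) := by
    rcases le_or_gt ρ 1 with hρ1 | hρ1
    · exact (pow_le_one₀ hρ hρ1).trans (le_max_left _ _)
    · exact (pow_le_pow_right₀ hρ1.le hqp).trans (le_max_right _ _)
  have hμq : (μ ^ (((n : ℝ) + p)⁻¹)) ^ (n + q) ≤ μ := by
    rw [← Real.rpow_natCast, ← Real.rpow_mul (by linarith)]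
    refine (Real.rpow_le_rpow_of_exponent_le hμ ?_).trans_eq (Real.rpow_one μ)
    rw [inv_mul_le_iff₀ hnp, mul_one]
    push_cast
    exact_mod_cast Nat.add_le_add_left hqp n
  gcongr

theorem statement12_general {d : ℕ} (𝒜 : Finset (Matrix (Fin d) (Fin d) ℝ))
    (ν : (Fin d → ℝ) → ℝ) (hν : IsNorm ν)
    (p : ℕ)
    (hchi : 0 < chi ν (↑𝒜 : Set (Matrix (Fin d) (Fin d) ℝ)) p)
    (n : ℕ) (hn : 1 ≤ n) (μ : ℝ) (hμ : 1 < μ)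
    (xstar : Fin d → ℝ) (hxstar : xstar ≠ 0)
    (lA : List (Matrix (Fin d) (Fin d) ℝ)) (hlA : ∀ A ∈ lA, A ∈ 𝒜)
    (hlen : lA.length = n)
    (hbig : μ * (max 1 ((jsrNu ν (↑𝒜 : Set (Matrix (Fin d) (Fin d) ℝ))) ^ p) /
          chi ν (↑𝒜 : Set (Matrix (Fin d) (Fin d) ℝ)) p) *
        (jsrNu ν (↑𝒜 : Set (Matrix (Fin d) (Fin d) ℝ))) ^ n * ν xstar ≤
        ν (lA.prod.mulVec xstar)) :
    1 < μ ^ (((n : ℝ) + p)⁻¹) ∧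
    ∃ H : ℕ → List (Matrix (Fin d) (Fin d) ℝ),
      (∀ k, ∀ A ∈ H k, A ∈ 𝒜) ∧
      Filter.Tendsto (fun k => (H k).length) Filter.atTop Filter.atTop ∧
      ∀ k, (μ ^ (((n : ℝ) + p)⁻¹) *
              jsrNu ν (↑𝒜 : Set (Matrix (Fin d) (Fin d) ℝ))) ^ (H k).length ≤
        opNorm ν ((H k).prod) := by
  set ρ := jsrNu ν (↑𝒜 : Set (Matrix (Fin d) (Fin d) ℝ))
  set χ := chi ν (↑𝒜 : Set (Matrix (Fin d) (Fin d) ℝ)) p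
  have hnp : (0 : ℝ) < n + p := by positivity
  refine ⟨Real.one_lt_rpow hμ (inv_pos.2 hnp), ?_⟩
  have hρ : 0 ≤ ρ := hν.jsrNu_nonneg _
  have hνx := hν.pos hxstar
  have hχP : μ * max 1 (ρ ^ p) * ρ ^ n * ν xstar ≤ χ * ν (lA.prod *ᵥ xstar) :=
    calc μ * max 1 (ρ ^ p) * ρ ^ n * ν xstar
        = χ * (μ * (max 1 (ρ ^ p) / χ) * ρ ^ n * ν xstar) := by field_simp
      _ ≤ χ * ν (lA.prod *ᵥ xstar) := by gcongr
  refine exists_seq_pow_le_opNorm_of_stretch hν hxstar (by positivity) fun w => ?_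
  obtain ⟨B, hB, hBw⟩ := exists_prodsLe_stretch hν 𝒜.finite_toSet hchi lA.prod hxstar w
  obtain ⟨lB, hlBp, hlB𝒜, rfl⟩ := mem_prodsLe.1 hB
  refine ⟨lA ++ lB, fun A hA => (List.mem_append.1 hA).elim (hlA A) (hlB𝒜 A), by simp; omega, ?_⟩
  rw [List.length_append, hlen, List.prod_append]
  have hstep := rpow_inv_mul_pow_le hμ.le hρ hnp hlBp
  refine le_of_mul_le_mul_left ?_ hνx
  calc ν xstar * ((μ ^ (((n : ℝ) + p)⁻¹) * ρ) ^ (n + lB.length) * ν w)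
      ≤ μ * max 1 (ρ ^ p) * ρ ^ n * ν xstar * ν w := by
        rw [mul_left_comm, ← mul_assoc]
        gcongr
        exact hν.1 w
    _ ≤ χ * ν (lA.prod *ᵥ xstar) * ν w := by gcongr; exact hν.1 w
    _ ≤ ν xstar * ν ((lA.prod * lB.prod) *ᵥ w) := hBw

/-- if some `n`-fold product satisfies
`‖A_{iₙ}⋯A_{i₁} x*‖ ≥ μ η_p(𝒜) ρ(𝒜)ⁿ ‖x*‖` with `μ > 1`, then there are products `H_k`
from `𝒜` with `len(H_k) → ∞` and `‖H_k‖ ≥ (η ρ(𝒜))^{len(H_k)}`, where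
`η = μ^{1/(n+p)} > 1`. -/
theorem statement12 {d : ℕ} (𝒜 : Finset (Matrix (Fin d) (Fin d) ℝ)) (h𝒜 : 𝒜.Nonempty)
    (ν : (Fin d → ℝ) → ℝ) (hν : IsNorm ν)
    (p : ℕ) (hp : d - 1 ≤ p)
    (hirr : MatSetIrreducible (↑𝒜 : Set (Matrix (Fin d) (Fin d) ℝ)))
    (hchi : 0 < chi ν (↑𝒜 : Set (Matrix (Fin d) (Fin d) ℝ)) p)
    (n : ℕ) (hn : 1 ≤ n) (μ : ℝ) (hμ : 1 < μ)
    (xstar : Fin d → ℝ) (hxstar : xstar ≠ 0)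
    (lA : List (Matrix (Fin d) (Fin d) ℝ)) (hlA : ∀ A ∈ lA, A ∈ 𝒜)
    (hlen : lA.length = n)
    (hbig : μ * (max 1 ((jsrNu ν (↑𝒜 : Set (Matrix (Fin d) (Fin d) ℝ))) ^ p) /
          chi ν (↑𝒜 : Set (Matrix (Fin d) (Fin d) ℝ)) p) *
        (jsrNu ν (↑𝒜 : Set (Matrix (Fin d) (Fin d) ℝ))) ^ n * ν xstar ≤
        ν (lA.prod.mulVec xstar)) :
    1 < μ ^ (((n : ℝ) + p)⁻¹) ∧
    ∃ H : ℕ → List (Matrix (Fin d) (Fin d) ℝ),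
      (∀ k, ∀ A ∈ H k, A ∈ 𝒜) ∧
      Filter.Tendsto (fun k => (H k).length) Filter.atTop Filter.atTop ∧
      ∀ k, (μ ^ (((n : ℝ) + p)⁻¹) *
              jsrNu ν (↑𝒜 : Set (Matrix (Fin d) (Fin d) ℝ))) ^ (H k).length ≤
        opNorm ν ((H k).prod) :=
  statement12_general 𝒜 ν hν p hchi n hn μ hμ xstar hxstar lA hlA hlen hbig
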